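/- arXiv:0907.4747 — 3 statements merged into one kernel-verified Lean document; each statement's English description precedes it below -/
import Mathlib

section
/- If $m$ and $n$ are relatively prime odd positive integers, then the Gauss-type sum $G_k(mn) = G_k(m)G_k(n)$, where $G_k(n) = \left(\frac{1-i}{2} + \left(\frac{-1}{n}\right)\frac{1+i}{2}\right) \sum_{a \bmod n} \left(\frac{a}{n}\right) e^{2\pi i ak/n}$. -/
open Finset

lemma exp_cong_aux (k : ℤ) (N : ℕ) (hN : N ≠ 0) {x y : ℤ} (h : (N:ℤ) ∣ x - y) :
    Complex.exp (2 * Real.pi * Complex.I * ((x:ℂ) * (k:ℂ)) / (N:ℂ)) =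
      Complex.exp (2 * Real.pi * Complex.I * ((y:ℂ) * (k:ℂ)) / (N:ℂ)) := by
  obtain ⟨t, ht⟩ := h
  have hx : (x:ℂ) = (y:ℂ) + (N:ℂ) * (t:ℂ) := by
    have : x = y + N * t := by linarith
    exact_mod_cast congrArg (Int.cast : ℤ → ℂ) this
  have hNC : (N:ℂ) ≠ 0 := Nat.cast_ne_zero.mpr hN
  rw [show 2 * Real.pi * Complex.I * ((x:ℂ) * (k:ℂ)) / (N:ℂ)
      = 2 * Real.pi * Complex.I * ((y:ℂ) * (k:ℂ)) / (N:ℂ) + (t*k : ℤ) * (2 * Real.pi * Complex.I) by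
    push_cast [hx]; field_simp]
  rw [Complex.exp_add, Complex.exp_int_mul_two_pi_mul_I, mul_one]

lemma exp_cong_nat (k : ℤ) (N : ℕ) (hN : N ≠ 0) (x y : ℕ) (h : x % N = y % N) :
    Complex.exp (2 * Real.pi * Complex.I * ((x:ℂ) * (k:ℂ)) / (N:ℂ)) =
      Complex.exp (2 * Real.pi * Complex.I * ((y:ℂ) * (k:ℂ)) / (N:ℂ)) := by
  have h2 : ((N:ℕ):ℤ) ∣ (x:ℤ) - (y:ℤ) := ((Int.natCast_modEq_iff.mpr h).symm).dvd
  have := exp_cong_aux k N hN h2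
  push_cast at this
  exact this

lemma S_mul (k : ℤ) (m n : ℕ) (hm : 0 < m) (hn : 0 < n) (hmn : Nat.Coprime m n) :
    ∑ a ∈ Finset.range (m*n), (jacobiSym (a : ℤ) (m*n) : ℂ) *
        Complex.exp (2 * Real.pi * Complex.I * ((a : ℂ) * (k : ℂ)) / ((m*n : ℕ) : ℂ)) =
      ((jacobiSym n m * jacobiSym m n : ℤ) : ℂ) *
        ((∑ b ∈ Finset.range m, (jacobiSym (b : ℤ) m : ℂ) *
            Complex.exp (2 * Real.pi * Complex.I * ((b : ℂ) * (k : ℂ)) / (m : ℂ))) *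
         (∑ c ∈ Finset.range n, (jacobiSym (c : ℤ) n : ℂ) *
            Complex.exp (2 * Real.pi * Complex.I * ((c : ℂ) * (k : ℂ)) / (n : ℂ)))) := by
  haveI : NeZero m := ⟨hm.ne'⟩
  haveI : NeZero n := ⟨hn.ne'⟩
  have hmC : (m:ℂ) ≠ 0 := Nat.cast_ne_zero.mpr hm.ne'
  have hnC : (n:ℂ) ≠ 0 := Nat.cast_ne_zero.mpr hn.ne'
  rw [Finset.sum_mul_sum]
  simp only [Finset.mul_sum]
  rw [← Finset.sum_product']
  symm
  refine Finset.sum_nbij (fun p => (p.1 * n + p.2 * m) % (m * n)) ?_ ?_ ?_ ?_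
  · rintro ⟨b, c⟩ h
    exact Finset.mem_range.mpr (Nat.mod_lt _ (Nat.mul_pos hm hn))
  · rintro ⟨b, c⟩ hb ⟨b', c'⟩ hb' hEq
    simp only [Finset.mem_coe, Finset.mem_product, Finset.mem_range] at hb hb'
    have hmod : (b * n + c * m) % (m * n) = (b' * n + c' * m) % (m * n) := hEq
    have hmn' : Nat.ModEq (m*n) (b * n + c * m) (b' * n + c' * m) := hmod
    have hm1 : Nat.ModEq m (b * n) (b' * n) := by
      have := (hmn'.of_mul_right n)
      calc b * n ≡ b * n + c * m [MOD m] := (Nat.ModEq.refl _).add (Nat.modEq_zero_iff_dvd.mpr ⟨c, mul_comm c m⟩).symm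
        _ ≡ b' * n + c' * m [MOD m] := this
        _ ≡ b' * n [MOD m] := (Nat.ModEq.refl _).add (Nat.modEq_zero_iff_dvd.mpr ⟨c', mul_comm c' m⟩)
    have hn1 : Nat.ModEq n (c * m) (c' * m) := by
      have := (hmn'.of_mul_left m)
      calc c * m ≡ b * n + c * m [MOD n] := by
              simpa using ((Nat.modEq_zero_iff_dvd.mpr ⟨b, mul_comm b n⟩).symm.add (Nat.ModEq.refl (c*m)))
        _ ≡ b' * n + c' * m [MOD n] := this
        _ ≡ c' * m [MOD n] := by
              simpa using ((Nat.modEq_zero_iff_dvd.mpr ⟨b', mul_comm b' n⟩).add (Nat.ModEq.refl (c'*m)))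
    have hb1 : b = b' := by
      have := (hm1.cancel_right_of_coprime (by simpa [Nat.Coprime] using hmn))
      have h1 : b % m = b' % m := this
      rwa [Nat.mod_eq_of_lt hb.1, Nat.mod_eq_of_lt hb'.1] at h1
    have hc1 : c = c' := by
      have := (hn1.cancel_right_of_coprime (by simpa [Nat.Coprime] using hmn.symm))
      have h1 : c % n = c' % n := this
      rwa [Nat.mod_eq_of_lt hb.2, Nat.mod_eq_of_lt hb'.2] at h1
    simp [Prod.ext_iff, hb1, hc1]
  · -- surjectivity via cardinality
    intro a ha
    have hinj : Set.InjOn (fun p : ℕ × ℕ => (p.1 * n + p.2 * m) % (m * n))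
        ↑(Finset.range m ×ˢ Finset.range n) := by
      rintro ⟨b, c⟩ hb ⟨b', c'⟩ hb' hEq
      simp only [Finset.mem_coe, Finset.mem_product, Finset.mem_range] at hb hb'
      have hmod : (b * n + c * m) % (m * n) = (b' * n + c' * m) % (m * n) := hEq
      have hmn' : Nat.ModEq (m*n) (b * n + c * m) (b' * n + c' * m) := hmod
      have hm1 : Nat.ModEq m (b * n) (b' * n) := by
        have := (hmn'.of_mul_right n)
        calc b * n ≡ b * n + c * m [MOD m] := (Nat.ModEq.refl _).add (Nat.modEq_zero_iff_dvd.mpr ⟨c, mul_comm c m⟩).symm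
          _ ≡ b' * n + c' * m [MOD m] := this
          _ ≡ b' * n [MOD m] := (Nat.ModEq.refl _).add (Nat.modEq_zero_iff_dvd.mpr ⟨c', mul_comm c' m⟩)
      have hn1 : Nat.ModEq n (c * m) (c' * m) := by
        have := (hmn'.of_mul_left m)
        calc c * m ≡ b * n + c * m [MOD n] := by
                simpa using ((Nat.modEq_zero_iff_dvd.mpr ⟨b, mul_comm b n⟩).symm.add (Nat.ModEq.refl (c*m)))
          _ ≡ b' * n + c' * m [MOD n] := this
          _ ≡ c' * m [MOD n] := by
                simpa using ((Nat.modEq_zero_iff_dvd.mpr ⟨b', mul_comm b' n⟩).add (Nat.ModEq.refl (c'*m)))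
      have hb1 : b = b' := by
        have := (hm1.cancel_right_of_coprime (by simpa [Nat.Coprime] using hmn))
        have h1 : b % m = b' % m := this
        rwa [Nat.mod_eq_of_lt hb.1, Nat.mod_eq_of_lt hb'.1] at h1
      have hc1 : c = c' := by
        have := (hn1.cancel_right_of_coprime (by simpa [Nat.Coprime] using hmn.symm))
        have h1 : c % n = c' % n := this
        rwa [Nat.mod_eq_of_lt hb.2, Nat.mod_eq_of_lt hb'.2] at h1
      simp [Prod.ext_iff, hb1, hc1]
    have himg : (Finset.range m ×ˢ Finset.range n).image
        (fun p : ℕ × ℕ => (p.1 * n + p.2 * m) % (m * n)) = Finset.range (m*n) := by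
      apply Finset.eq_of_subset_of_card_le
      · intro x hx
        obtain ⟨p, hp, rfl⟩ := Finset.mem_image.mp hx
        exact Finset.mem_range.mpr (Nat.mod_lt _ (Nat.mul_pos hm hn))
      · rw [Finset.card_image_of_injOn hinj]
        simp
    rw [← Finset.coe_image, himg]
    exact ha
  · rintro ⟨b, c⟩ h
    simp only [Finset.mem_product, Finset.mem_range] at h
    obtain ⟨hb, hc⟩ := h
    have hNe : m * n ≠ 0 := (Nat.mul_pos hm hn).ne'
    -- Jacobi symbol computation
    have e1 : (jacobiSym (((b*n+c*m) % (m*n) : ℕ) : ℤ) (m*n))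
        = jacobiSym ((b*n+c*m : ℕ) : ℤ) (m*n) := by
      rw [Int.natCast_mod, ← jacobiSym.mod_left]
    have e2 : jacobiSym ((b*n+c*m : ℕ) : ℤ) (m*n)
        = jacobiSym ((b*n+c*m : ℕ) : ℤ) m * jacobiSym ((b*n+c*m : ℕ) : ℤ) n :=
      jacobiSym.mul_right _ m n
    have e3 : jacobiSym ((b*n+c*m : ℕ) : ℤ) m = jacobiSym b m * jacobiSym n m := by
      have h' : jacobiSym ((b*n+c*m : ℕ) : ℤ) m = jacobiSym ((b:ℤ)*(n:ℤ)) m := by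
        apply jacobiSym.mod_left'
        push_cast
        rw [Int.add_mul_emod_self_right]
      rw [h', jacobiSym.mul_left]
    have e4 : jacobiSym ((b*n+c*m : ℕ) : ℤ) n = jacobiSym c n * jacobiSym m n := by
      have h' : jacobiSym ((b*n+c*m : ℕ) : ℤ) n = jacobiSym ((c:ℤ)*(m:ℤ)) n := by
        apply jacobiSym.mod_left'
        push_cast
        rw [add_comm, Int.add_mul_emod_self_right]
      rw [h', jacobiSym.mul_left]
    -- exponential computation
    have hE1 := exp_cong_nat k (m*n) hNe ((b*n+c*m) % (m*n)) (b*n+c*m)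
      (Nat.mod_mod_of_dvd _ dvd_rfl)
    have hE2 : Complex.exp (2 * Real.pi * Complex.I * (((b*n+c*m : ℕ):ℂ) * (k:ℂ)) / ((m*n : ℕ) : ℂ))
        = Complex.exp (2 * Real.pi * Complex.I * ((b : ℂ) * (k : ℂ)) / (m : ℂ)) *
          Complex.exp (2 * Real.pi * Complex.I * ((c : ℂ) * (k : ℂ)) / (n : ℂ)) := by
      rw [← Complex.exp_add]
      congr 1
      push_cast
      field_simp
    simp only []
    rw [e1, e2, e3, e4, hE1, hE2]
    push_cast
    ring

lemma eps_mul (m n : ℕ) (hm : 0 < m) (hn : 0 < n) (hmo : Odd m) (hno : Odd n)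
    (hmn : Nat.Coprime m n) :
    ((1 - Complex.I) / 2 + (jacobiSym (-1) (m*n) : ℂ) * (1 + Complex.I) / 2) *
        ((jacobiSym n m * jacobiSym m n : ℤ) : ℂ) =
      ((1 - Complex.I) / 2 + (jacobiSym (-1) m : ℂ) * (1 + Complex.I) / 2) *
        ((1 - Complex.I) / 2 + (jacobiSym (-1) n : ℂ) * (1 + Complex.I) / 2) := by
  haveI : NeZero m := ⟨hm.ne'⟩
  haveI : NeZero n := ⟨hn.ne'⟩
  have h1 : jacobiSym (-1) (m*n) = jacobiSym (-1) m * jacobiSym (-1) n :=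
    jacobiSym.mul_right (-1) m n
  have h2 : jacobiSym (-1) m = (-1)^(m/2) := by
    rw [jacobiSym.at_neg_one hmo, ZMod.χ₄_eq_neg_one_pow (Nat.odd_iff.mp hmo)]
  have h3 : jacobiSym (-1) n = (-1)^(n/2) := by
    rw [jacobiSym.at_neg_one hno, ZMod.χ₄_eq_neg_one_pow (Nat.odd_iff.mp hno)]
  have hg : ((m:ℤ).gcd n) = 1 := by simpa using hmn
  have h4 : jacobiSym n m * jacobiSym m n = (-1)^(n/2 * (m/2)) := by
    rw [jacobiSym.quadratic_reciprocity hno hmo, mul_assoc, ← sq, jacobiSym.sq_one hg, mul_one]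
  rw [h1, h2, h3, h4]
  rcases Nat.even_or_odd (m/2) with he | ho <;> rcases Nat.even_or_odd (n/2) with he' | ho'
  · rw [he.neg_one_pow, he'.neg_one_pow, (he.mul_left _).neg_one_pow]
    push_cast
    ring
  · rw [he.neg_one_pow, ho'.neg_one_pow, (he.mul_left _).neg_one_pow]
    push_cast
    ring
  · rw [ho.neg_one_pow, he'.neg_one_pow, (he'.mul_right _).neg_one_pow]
    push_cast
    ring
  · rw [ho.neg_one_pow, ho'.neg_one_pow, (ho'.mul ho).neg_one_pow]
    push_cast
    ring_nf
    rw [Complex.I_sq]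

theorem GaussG_mul' (k : ℤ) (m n : ℕ) (hm : 0 < m) (hn : 0 < n)
    (hmo : Odd m) (hno : Odd n) (hmn : Nat.Coprime m n) :
    (((1 - Complex.I) / 2 + (jacobiSym (-1) (m*n) : ℂ) * (1 + Complex.I) / 2) *
    ∑ a ∈ Finset.range (m*n), (jacobiSym (a : ℤ) (m*n) : ℂ) *
      Complex.exp (2 * Real.pi * Complex.I * ((a : ℂ) * (k : ℂ)) / ((m*n : ℕ) : ℂ)))
    = (((1 - Complex.I) / 2 + (jacobiSym (-1) m : ℂ) * (1 + Complex.I) / 2) *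
    ∑ a ∈ Finset.range m, (jacobiSym (a : ℤ) m : ℂ) *
      Complex.exp (2 * Real.pi * Complex.I * ((a : ℂ) * (k : ℂ)) / (m : ℂ))) *
      (((1 - Complex.I) / 2 + (jacobiSym (-1) n : ℂ) * (1 + Complex.I) / 2) *
    ∑ a ∈ Finset.range n, (jacobiSym (a : ℤ) n : ℂ) *
      Complex.exp (2 * Real.pi * Complex.I * ((a : ℂ) * (k : ℂ)) / (n : ℂ))) := by
  rw [S_mul k m n hm hn hmn]
  linear_combination
    ((∑ b ∈ Finset.range m, (jacobiSym (b : ℤ) m : ℂ) *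
        Complex.exp (2 * Real.pi * Complex.I * ((b : ℂ) * (k : ℂ)) / (m : ℂ))) *
     (∑ c ∈ Finset.range n, (jacobiSym (c : ℤ) n : ℂ) *
        Complex.exp (2 * Real.pi * Complex.I * ((c : ℂ) * (k : ℂ)) / (n : ℂ)))) *
      eps_mul m n hm hn hmo hno hmn

/-- The Gauss-type sum `G_k(n)` for odd positive `n`. -/
noncomputable def GaussG (k : ℤ) (n : ℕ) : ℂ :=
  ((1 - Complex.I) / 2 + (jacobiSym (-1) n : ℂ) * (1 + Complex.I) / 2) *
    ∑ a ∈ Finset.range n, (jacobiSym (a : ℤ) n : ℂ) *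
      Complex.exp (2 * Real.pi * Complex.I * ((a : ℂ) * (k : ℂ)) / (n : ℂ))

theorem GaussG_mul (k : ℤ) (m n : ℕ) (hm : 0 < m) (hn : 0 < n)
    (hmo : Odd m) (hno : Odd n) (hmn : Nat.Coprime m n) :
    GaussG k (m * n) = GaussG k m * GaussG k n := by
  rw [GaussG, GaussG, GaussG]
  exact GaussG_mul' k m n hm hn hmo hno hmn
end

section
/- For any odd positive integer $m$ and any integer $k$, $G_k(m) = G_{4k}(m)$. -/
open Finset

private lemma expAux (m : ℕ) (hm : 0 < m) (k v w : ℤ) (h : v ≡ w [ZMOD (m : ℤ)]) :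
    Complex.exp (2 * Real.pi * Complex.I * ((v : ℂ) * (k : ℂ)) / (m : ℂ)) =
      Complex.exp (2 * Real.pi * Complex.I * ((w : ℂ) * (k : ℂ)) / (m : ℂ)) := by
  have hmC : (m : ℂ) ≠ 0 := by exact_mod_cast hm.ne'
  obtain ⟨t, ht⟩ : (m : ℤ) ∣ v - w := Int.ModEq.dvd h.symm
  have hv : (v : ℂ) = (w : ℂ) + (m : ℂ) * (t : ℂ) := by
    have : v = w + m * t := by linarith [ht]
    exact_mod_cast congrArg (Int.cast : ℤ → ℂ) this
  have harg : 2 * (Real.pi : ℂ) * Complex.I * ((v : ℂ) * (k : ℂ)) / (m : ℂ) =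
      2 * (Real.pi : ℂ) * Complex.I * ((w : ℂ) * (k : ℂ)) / (m : ℂ) +
        ((t * k : ℤ) : ℂ) * (2 * (Real.pi : ℂ) * Complex.I) := by
    rw [hv]; push_cast; field_simp
  rw [harg, Complex.exp_add, Complex.exp_int_mul_two_pi_mul_I, mul_one]

theorem GaussG_four_mul (m : ℕ) (hm : 0 < m) (hodd : Odd m) (k : ℤ) :
    GaussG k m = GaussG (4 * k) m := by
  haveI : NeZero m := ⟨hm.ne'⟩
  have hcop : Nat.Coprime 4 m := by
    have h2 : Nat.Coprime 2 m := hodd.coprime_two_left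
    have := h2.pow_left 2
    norm_num at this
    exact this
  have hJ4 : jacobiSym 4 m = 1 := by
    have hg : Int.gcd 2 (m : ℤ) = 1 := by
      exact hodd.coprime_two_left
    have h4 : ((4 : ℤ)) = (2 : ℤ) ^ 2 := by norm_num
    rw [h4, jacobiSym.sq_one' hg]
  unfold GaussG
  congr 1
  -- rewrite both sums as sums over `ZMod m`
  have key : ∀ j : ℤ, ∑ a ∈ Finset.range m, (jacobiSym (a : ℤ) m : ℂ) *
      Complex.exp (2 * Real.pi * Complex.I * ((a : ℂ) * (j : ℂ)) / (m : ℂ)) =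
      ∑ x : ZMod m, (jacobiSym (x.val : ℤ) m : ℂ) *
        Complex.exp (2 * Real.pi * Complex.I * ((x.val : ℂ) * (j : ℂ)) / (m : ℂ)) := by
    intro j
    refine Finset.sum_nbij' (fun a => (a : ZMod m)) (fun x => x.val) ?_ ?_ ?_ ?_ ?_
    · intro a _; exact Finset.mem_univ _
    · intro x _; exact Finset.mem_range.mpr (ZMod.val_lt x)
    · intro a ha; exact ZMod.val_cast_of_lt (Finset.mem_range.mp ha)
    · intro x _; exact ZMod.natCast_rightInverse x
    · intro a ha
      rw [ZMod.val_cast_of_lt (Finset.mem_range.mp ha)]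
  rw [key k, key (4 * k)]
  -- reindex by multiplication by the unit 4
  have hu : IsUnit (4 : ZMod m) := by
    have : ((4 : ℕ) : ZMod m) = (4 : ZMod m) := by norm_cast
    exact this ▸ (ZMod.isUnit_iff_coprime 4 m).mpr hcop
  obtain ⟨u, hu4⟩ := hu
  rw [← Fintype.sum_bijective (fun x : ZMod m => (4 : ZMod m) * x)
    (hu4 ▸ (Units.mulLeft u).bijective) _ _ (fun x => rfl)]
  refine Finset.sum_congr rfl fun x _ => ?_
  have hcong : ((((4 : ZMod m) * x).val : ℤ)) ≡ 4 * (x.val : ℤ) [ZMOD (m : ℤ)] := by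
    have : ((((4 : ZMod m) * x).val : ℤ) : ZMod m) = ((4 * (x.val : ℤ) : ℤ) : ZMod m) := by
      push_cast
      simp [ZMod.natCast_val, ZMod.cast_id]
    exact (ZMod.intCast_eq_intCast_iff _ _ _).mp this
  have hJ : (jacobiSym ((((4 : ZMod m) * x).val : ℤ)) m : ℂ) = (jacobiSym (x.val : ℤ) m : ℂ) := by
    rw [jacobiSym.mod_left' hcong, jacobiSym.mul_left, hJ4, one_mul]
  have hE : Complex.exp (2 * Real.pi * Complex.I *
        (((((4 : ZMod m) * x).val : ℕ) : ℂ) * (k : ℂ)) / (m : ℂ)) =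
      Complex.exp (2 * Real.pi * Complex.I * (((x.val : ℕ) : ℂ) * ((4 * k : ℤ) : ℂ)) / (m : ℂ)) := by
    have h1 := expAux m hm k (((4 : ZMod m) * x).val : ℤ) (4 * (x.val : ℤ)) hcong
    push_cast at h1 ⊢
    rw [h1]; ring_nf
  rw [show ((((4 : ZMod m) * x).val : ℤ)) = ((((4 : ZMod m) * x).val : ℕ) : ℤ) from rfl] at hJ
  rw [hJ, hE]
end

section
/- Let $k$ be a natural number, $y \ge 2$, and let $a(p)$ be complex numbers indexed by primes. The number of $2k$-tuples of primes $(p_1,\dots,p_{2k})$ with each $p_i \le y$ and $p_1 \cdots p_{2k}$ a perfect square satisfies $\sum_{\substack{p_1,\dots,p_{2k} \le y \\ p_1\cdots p_{2k} = \square}} \frac{|a(p_1) \cdots a(p_{2k})|}{\sqrt{p_1 \cdots p_{2k}}} \le \frac{(2k)!}{k! 2^k} \left(\sum_{p \le y} \frac{|a(p)|^2}{p}\right)^k$. -/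
open Finset
open scoped Classical

/-!
In a tuple of primes with square product, the last prime equals an earlier entry. Hence every
square tuple of length `n + 2` is obtained from a square tuple of length `n` by inserting some
prime `p` at one of `n + 1` positions and again at the end, which multiplies the weight by
`f p ^ 2`. This bounds the sum over length `n + 2` by `(n + 1) * ∑ p, f p ^ 2` times the sum over
length `n`, and iterating produces `1 * 3 * ⋯ * (2k - 1) = (2k)! / (k! 2^k)`.
-/

namespace Fin

variable {α : Type*} {n : ℕ}

def insertPair (j : Fin (n + 1)) (x : α) (q : Fin n → α) : Fin (n + 2) → α :=
  snoc (insertNth j x q) x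

theorem prod_insertPair {M : Type*} [CommMonoid M] (g : α → M) (j : Fin (n + 1)) (x : α)
    (q : Fin n → α) : ∏ i, g (insertPair j x q i) = g x ^ 2 * ∏ i, g (q i) := by
  rw [prod_univ_castSucc, prod_univ_succAbove _ j]
  simp only [insertPair, snoc_castSucc, snoc_last, insertNth_apply_same,
    insertNth_apply_succAbove]
  rw [mul_right_comm, ← sq]

theorem insertPair_removeNth_init (ps : Fin (n + 2) → α) {j : Fin (n + 1)}
    (hj : ps j.castSucc = ps (last (n + 1))) :
    insertPair j (ps (last (n + 1))) (j.removeNth (init ps)) = ps := by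
  have hinit : insertNth j (ps (last (n + 1))) (j.removeNth (init ps)) = init ps := by
    rw [← hj]
    exact insertNth_self_removeNth j (init ps)
  rw [insertPair, hinit, snoc_init_self]

end Fin

theorem Nat.isSquare_of_isSquare_sq_mul {a b : ℕ} (ha : a ≠ 0) (h : IsSquare (a ^ 2 * b)) :
    IsSquare b := by
  obtain ⟨c, hc⟩ := h
  obtain ⟨d, rfl⟩ : a ∣ c := (Nat.pow_dvd_pow_iff two_ne_zero).mp ⟨b, by rw [sq c, ← hc]⟩
  refine ⟨d, Nat.eq_of_mul_eq_mul_left (pow_pos (Nat.pos_of_ne_zero ha) 2) ?_⟩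
  rw [hc]
  ring

theorem Nat.Prime.dvd_prod_init_of_isSquare {n : ℕ} {ps : Fin (n + 1) → ℕ}
    (hp : (ps (Fin.last n)).Prime) (hsq : IsSquare (∏ i, ps i)) :
    ps (Fin.last n) ∣ ∏ i : Fin n, ps i.castSucc := by
  obtain ⟨c, hc⟩ := hsq
  rw [Fin.prod_univ_castSucc] at hc
  obtain ⟨d, rfl⟩ : ps (Fin.last n) ∣ c :=
    hp.prime.dvd_of_dvd_pow (n := 2) ⟨_, by rw [sq, ← hc, mul_comm]⟩
  refine Nat.dvd_of_mul_dvd_mul_right hp.pos ⟨d * d, ?_⟩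
  rw [hc]
  ring

theorem exists_castSucc_eq_last_of_isSquare_prod {n : ℕ} {ps : Fin (n + 1) → ℕ}
    (hps : ∀ i, (ps i).Prime) (hsq : IsSquare (∏ i, ps i)) :
    ∃ j : Fin n, ps j.castSucc = ps (Fin.last n) := by
  obtain ⟨j, -, hj⟩ :=
    (hps _).prime.exists_mem_finset_dvd ((hps _).dvd_prod_init_of_isSquare hsq)
  exact ⟨j, ((Nat.prime_dvd_prime_iff_eq (hps _) (hps _)).mp hj).symm⟩

def squareTuples (P : Finset ℕ) (n : ℕ) : Finset (Fin n → ℕ) :=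
  (Fintype.piFinset fun _ : Fin n => P).filter fun ps => IsSquare (∏ i, ps i)

section squareTuples

variable {P : Finset ℕ}

theorem squareTuples_subset_image (hP : ∀ p ∈ P, p.Prime) (n : ℕ) :
    squareTuples P (n + 2) ⊆
      (univ ×ˢ P ×ˢ squareTuples P n).image fun x => Fin.insertPair x.1 x.2.1 x.2.2 := by
  intro ps hps
  simp only [squareTuples, mem_filter, Fintype.mem_piFinset] at hps
  obtain ⟨hmem, hsq⟩ := hps
  obtain ⟨j, hj⟩ := exists_castSucc_eq_last_of_isSquare_prod (fun i => hP _ (hmem i)) hsq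
  have hps := Fin.insertPair_removeNth_init ps hj
  refine mem_image.mpr ⟨(j, ps (Fin.last _), j.removeNth (Fin.init ps)), ?_, hps⟩
  simp only [squareTuples, mem_product, mem_univ, mem_filter, Fintype.mem_piFinset, true_and]
  refine ⟨hmem _, fun i => hmem _,
    Nat.isSquare_of_isSquare_sq_mul (hP _ (hmem (Fin.last _))).ne_zero ?_⟩
  convert hsq using 1
  conv_rhs => rw [← hps]
  exact (Fin.prod_insertPair id _ _ _).symm

theorem sum_prod_squareTuples_add_two_le (hP : ∀ p ∈ P, p.Prime) {f : ℕ → ℝ}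
    (hf : ∀ p, 0 ≤ f p) (n : ℕ) :
    ∑ ps ∈ squareTuples P (n + 2), ∏ i, f (ps i) ≤
      (n + 1) * (∑ p ∈ P, f p ^ 2) * ∑ qs ∈ squareTuples P n, ∏ i, f (qs i) := by
  have hprod : ∀ {m} (ps : Fin m → ℕ), 0 ≤ ∏ i, f (ps i) := fun _ => prod_nonneg fun i _ => hf _
  calc ∑ ps ∈ squareTuples P (n + 2), ∏ i, f (ps i)
      ≤ ∑ ps ∈ (univ ×ˢ P ×ˢ squareTuples P n).image
          (fun x => Fin.insertPair x.1 x.2.1 x.2.2), ∏ i, f (ps i) :=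
        sum_le_sum_of_subset_of_nonneg (squareTuples_subset_image hP n) fun ps _ _ => hprod ps
    _ ≤ ∑ x ∈ univ ×ˢ P ×ˢ squareTuples P n, ∏ i, f (Fin.insertPair x.1 x.2.1 x.2.2 i) :=
        sum_image_le_of_nonneg fun ps _ => hprod ps
    _ = (n + 1) * (∑ p ∈ P, f p ^ 2) * ∑ qs ∈ squareTuples P n, ∏ i, f (qs i) := by
        simp only [Fin.prod_insertPair, sum_product, ← mul_sum, ← sum_mul, sum_const, card_univ,
          Fintype.card_fin, nsmul_eq_mul, Nat.cast_add_one]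
        ring

theorem sum_prod_squareTuples_le (hP : ∀ p ∈ P, p.Prime) {f : ℕ → ℝ} (hf : ∀ p, 0 ≤ f p)
    (k : ℕ) :
    ∑ ps ∈ squareTuples P (2 * k), ∏ i, f (ps i) ≤
      (2 * k).factorial / (k.factorial * 2 ^ k) * (∑ p ∈ P, f p ^ 2) ^ k := by
  induction k with
  | zero => simp [squareTuples]
  | succ k ih =>
    have hS : 0 ≤ ∑ p ∈ P, f p ^ 2 := sum_nonneg fun p _ => sq_nonneg (f p)
    calc ∑ ps ∈ squareTuples P (2 * (k + 1)), ∏ i, f (ps i)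
        ≤ (2 * k + 1) * (∑ p ∈ P, f p ^ 2) * ∑ ps ∈ squareTuples P (2 * k), ∏ i, f (ps i) := by
          exact_mod_cast sum_prod_squareTuples_add_two_le hP hf (2 * k)
      _ ≤ (2 * k + 1) * (∑ p ∈ P, f p ^ 2) *
            ((2 * k).factorial / (k.factorial * 2 ^ k) * (∑ p ∈ P, f p ^ 2) ^ k) := by
          gcongr
      _ = (2 * (k + 1)).factorial / ((k + 1).factorial * 2 ^ (k + 1)) *
            (∑ p ∈ P, f p ^ 2) ^ (k + 1) := by
          rw [show 2 * (k + 1) = 2 * k + 1 + 1 by ring, Nat.factorial_succ, Nat.factorial_succ,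
            Nat.factorial_succ]
          push_cast
          field_simp
          ring

end squareTuples

theorem square_tuple_sum_bound_general (k : ℕ) (y : ℝ) (a : ℕ → ℂ) :
    ∑ ps ∈ (Fintype.piFinset fun _ : Fin (2 * k) =>
        (Finset.range (⌊y⌋₊ + 1)).filter fun p : ℕ => p.Prime ∧ (p : ℝ) ≤ y).filter
        (fun ps => IsSquare (∏ i, ps i)),
      (∏ i, ‖a (ps i)‖) / Real.sqrt (∏ i, (ps i : ℝ)) ≤
    ((2 * k).factorial : ℝ) / (k.factorial * 2 ^ k) *
      (∑ p ∈ (Finset.range (⌊y⌋₊ + 1)).filter (fun p : ℕ => p.Prime ∧ (p : ℝ) ≤ y),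
        ‖a p‖ ^ 2 / (p : ℝ)) ^ k := by
  set f : ℕ → ℝ := fun p => ‖a p‖ / Real.sqrt p
  have hsummand : ∀ ps : Fin (2 * k) → ℕ,
      (∏ i, ‖a (ps i)‖) / Real.sqrt (∏ i, (ps i : ℝ)) = ∏ i, f (ps i) := fun ps => by
    rw [Real.sqrt_prod _ fun i _ => Nat.cast_nonneg _, ← prod_div_distrib]
  have hsq : ∀ p : ℕ, ‖a p‖ ^ 2 / (p : ℝ) = f p ^ 2 := fun p => by
    rw [div_pow, Real.sq_sqrt (Nat.cast_nonneg p)]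
  simp only [hsummand, hsq]
  exact sum_prod_squareTuples_le (fun p hp => (mem_filter.mp hp).2.1)
    (fun p => div_nonneg (norm_nonneg _) (Real.sqrt_nonneg _)) k

/-- The diagonal bound for the `2k`-th moment: the sum over tuples of primes
`p₁,…,p_{2k} ≤ y` whose product is a perfect square. -/
theorem square_tuple_sum_bound (k : ℕ) (y : ℝ) (hy : 2 ≤ y) (a : ℕ → ℂ) :
    ∑ ps ∈ (Fintype.piFinset fun _ : Fin (2 * k) =>
        (Finset.range (⌊y⌋₊ + 1)).filter fun p : ℕ => p.Prime ∧ (p : ℝ) ≤ y).filter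
        (fun ps => IsSquare (∏ i, ps i)),
      (∏ i, ‖a (ps i)‖) / Real.sqrt (∏ i, (ps i : ℝ)) ≤
    ((2 * k).factorial : ℝ) / (k.factorial * 2 ^ k) *
      (∑ p ∈ (Finset.range (⌊y⌋₊ + 1)).filter (fun p : ℕ => p.Prime ∧ (p : ℝ) ≤ y),
        ‖a p‖ ^ 2 / (p : ℝ)) ^ k :=
  square_tuple_sum_bound_general k y a
end
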